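/- arXiv:2411.16261 — 2 statements merged into one kernel-verified Lean document; each statement's English description precedes it below -/
import Mathlib

section
/- Let η ∈ (0,1) and let f : ℍ → ℝ be continuous with f ≥ 0. If u, v : ℍ → ℝ are two bounded C² functions each satisfying the Gauss equation Δ_ℍ u = 2e^{2u} − 1 + e^{−4u} f and Δ_ℍ v = 2e^{2v} − 1 + e^{−4v} f on ℍ, and each satisfying e^{−6u(z)} f(z) ≤ η and e^{−6v(z)} f(z) ≤ η for all z ∈ ℍ, then u = v. -/
/-!
For `w = u - v`, convexity of `exp` and the bound `e^{-6v} f ≤ η` give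
`Δ_ℍ w ≥ c w` wherever `w > 0`, with `c = 4 (1 - η) e^{-2 sup |v|} > 0`. A maximum principle on
the non-compact `ℍ` then forces `w ≤ 0`: with `ψ(z) = 2 cosh d_ℍ(z, i)`, the function `log ψ` is
a proper exhaustion of `ℍ` with `Δ_ℍ log ψ ≤ 2`, so `w - ε log ψ` attains its maximum, where
`c w ≤ Δ_ℍ w ≤ 2ε`; letting `ε → 0` contradicts `w > 0` anywhere. Exchanging `u` and `v` gives
equality.
-/

/-- The upper half-plane, as a subset of `ℂ`. -/
def UpperH : Set ℂ := {z : ℂ | 0 < z.im}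

/-- The hyperbolic Laplacian of `u : ℂ → ℝ` at `z`:
`Δ_ℍ u(z) = (Im z)² (∂²u/∂x² + ∂²u/∂y²)(z)`. -/
noncomputable def hypLaplacian (u : ℂ → ℝ) (z : ℂ) : ℝ :=
  z.im ^ 2 * (iteratedDeriv 2 (fun t : ℝ => u (z + (t : ℂ))) 0 +
              iteratedDeriv 2 (fun t : ℝ => u (z + (t : ℂ) * Complex.I)) 0)

/-- The hyperbolic distance on the upper half-plane. -/
noncomputable def hypDist (z w : ℂ) : ℝ :=
  2 * Real.arsinh (‖z - w‖ / (2 * Real.sqrt (z.im * w.im)))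

open Filter Topology Real

lemma iteratedDeriv_two_eq_deriv_deriv (f : ℝ → ℝ) (x : ℝ) :
    iteratedDeriv 2 f x = deriv (deriv f) x := by
  rw [iteratedDeriv_eq_iterate]; rfl

lemma IsLocalMax.iteratedDeriv_two_nonpos {f : ℝ → ℝ} {x : ℝ} (h : IsLocalMax f x)
    (hc : ContinuousAt f x) : iteratedDeriv 2 f x ≤ 0 := by
  rw [iteratedDeriv_two_eq_deriv_deriv]
  -- Otherwise the second derivative test makes `x` a local minimum too, so `f` is locally constant.
  by_contra! hpos
  have hmin : IsLocalMin f x := isLocalMin_of_deriv_deriv_pos hpos h.deriv_eq_zero hc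
  have hconst : f =ᶠ[𝓝 x] fun _ => f x := (h.and hmin).mono fun y hy => le_antisymm hy.1 hy.2
  have hderiv : deriv f =ᶠ[𝓝 x] fun _ => 0 := by simpa using hconst.deriv
  simp [hderiv.deriv_eq] at hpos

lemma iteratedDeriv_two_log_comp {p p' : ℝ → ℝ} {p'' x : ℝ}
    (hp : ∀ᶠ t in 𝓝 x, HasDerivAt p (p' t) t) (hp' : HasDerivAt p' p'' x) (hpos : 0 < p x) :
    iteratedDeriv 2 (fun t => log (p t)) x = p'' / p x - (p' x / p x) ^ 2 := by
  have hpos' : ∀ᶠ t in 𝓝 x, 0 < p t := hp.self_of_nhds.continuousAt.eventually (lt_mem_nhds hpos)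
  have hderiv : deriv (fun t => log (p t)) =ᶠ[𝓝 x] fun t => p' t / p t := by
    filter_upwards [hp, hpos'] with t ht htpos
    exact (ht.log htpos.ne').deriv
  rw [iteratedDeriv_two_eq_deriv_deriv, hderiv.deriv_eq,
    (hp'.fun_div hp.self_of_nhds hpos.ne').deriv]
  field_simp

lemma ContDiffAt.comp_add_ofReal_mul {n : WithTop ℕ∞} {u : ℂ → ℝ} {z : ℂ}
    (hu : ContDiffAt ℝ n u z) (w : ℂ) : ContDiffAt ℝ n (fun t : ℝ => u (z + t * w)) 0 := by
  have hline : ContDiffAt ℝ n (fun t : ℝ => z + t * w) 0 :=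
    (contDiff_const.add (Complex.ofRealCLM.contDiff.mul contDiff_const)).contDiffAt
  exact (show ContDiffAt ℝ n u ((fun t : ℝ => z + t * w) 0) by simpa using hu).comp 0 hline

lemma hypLaplacian_sub {u v : ℂ → ℝ} {z : ℂ} (hu : ContDiffAt ℝ 2 u z) (hv : ContDiffAt ℝ 2 v z) :
    hypLaplacian (fun ζ => u ζ - v ζ) z = hypLaplacian u z - hypLaplacian v z := by
  have h₁ := iteratedDeriv_fun_sub (n := 2) (x := 0) (f := fun t : ℝ => u (z + t))
    (g := fun t : ℝ => v (z + t)) (by simpa using hu.comp_add_ofReal_mul 1)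
    (by simpa using hv.comp_add_ofReal_mul 1)
  have h₂ := iteratedDeriv_fun_sub (n := 2) (hu.comp_add_ofReal_mul Complex.I)
    (hv.comp_add_ofReal_mul Complex.I)
  simp only [hypLaplacian, h₁, h₂]
  ring

lemma hypLaplacian_const_mul (c : ℝ) (u : ℂ → ℝ) (z : ℂ) :
    hypLaplacian (fun ζ => c * u ζ) z = c * hypLaplacian u z := by
  have h₁ := iteratedDeriv_fun_const_smul_field (x := (0:ℝ)) (n := 2) c
    (fun t : ℝ => u (z + t))
  have h₂ := iteratedDeriv_fun_const_smul_field (x := (0:ℝ)) (n := 2) c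
    (fun t : ℝ => u (z + t * Complex.I))
  simp only [smul_eq_mul] at h₁ h₂
  simp only [hypLaplacian, h₁, h₂]
  ring

lemma hypLaplacian_nonpos_of_isLocalMax {g : ℂ → ℝ} {z : ℂ} (hg : ContinuousAt g z)
    (hmax : IsLocalMax g z) : hypLaplacian g z ≤ 0 := by
  have hdir : ∀ w : ℂ, iteratedDeriv 2 (fun t : ℝ => g (z + t * w)) 0 ≤ 0 := by
    intro w
    have hline : Continuous (fun t : ℝ => z + t * w) := by fun_prop
    have hz : z + ((0:ℝ):ℂ) * w = z := by simp
    exact IsLocalMax.iteratedDeriv_two_nonpos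
      (IsLocalMax.comp_continuous (g := fun t : ℝ => z + t * w) (by rwa [hz]) hline.continuousAt)
      (ContinuousAt.comp (g := g) (by rwa [hz]) hline.continuousAt)
  have h₁ := hdir 1
  simp only [mul_one] at h₁
  exact mul_nonpos_of_nonneg_of_nonpos (sq_nonneg _) (add_nonpos h₁ (hdir Complex.I))

/-- `psi z = 2 cosh d_ℍ(z, i)`. -/
noncomputable def psi (z : ℂ) : ℝ := (z.re ^ 2 + z.im ^ 2 + 1) / z.im

lemma isOpen_upperH : IsOpen UpperH := isOpen_lt continuous_const Complex.continuous_im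

lemma two_le_psi {z : ℂ} (hz : z ∈ UpperH) : 2 ≤ psi z := by
  have hy : 0 < z.im := hz
  rw [psi, le_div_iff₀ hy]
  nlinarith [sq_nonneg z.re, sq_nonneg (z.im - 1)]

lemma contDiffOn_log_psi : ContDiffOn ℝ 2 (fun z => log (psi z)) UpperH := by
  have hre : ContDiff ℝ 2 Complex.re := Complex.reCLM.contDiff
  have him : ContDiff ℝ 2 Complex.im := Complex.imCLM.contDiff
  have hpsi : ContDiffOn ℝ 2 psi UpperH :=
    ((hre.pow 2).add (him.pow 2) |>.add contDiff_const).contDiffOn.div him.contDiffOn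
      fun z hz => (show 0 < z.im from hz).ne'
  exact hpsi.log fun z hz => (by linarith [two_le_psi hz] : psi z ≠ 0)

lemma isCompact_psi_le (R : ℝ) : IsCompact {z ∈ UpperH | psi z ≤ R} := by
  have hset : {z ∈ UpperH | psi z ≤ R} =
      {z : ℂ | 0 ≤ z.im ∧ z.re ^ 2 + z.im ^ 2 + 1 ≤ R * z.im} := by
    ext z
    simp only [Set.mem_ofPred_eq, UpperH, psi]
    constructor
    · rintro ⟨hy, h⟩
      exact ⟨hy.le, by rwa [div_le_iff₀ hy] at h⟩
    · rintro ⟨hy, h⟩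
      have hy : 0 < z.im := hy.lt_of_ne fun h0 => by
        rw [← h0] at h; nlinarith [sq_nonneg z.re]
      exact ⟨hy, by rwa [div_le_iff₀ hy]⟩
  rw [hset]
  refine Metric.isCompact_of_isClosed_isBounded
    ((isClosed_le continuous_const Complex.continuous_im).inter
      (isClosed_le (f := fun z : ℂ => z.re ^ 2 + z.im ^ 2 + 1) (g := fun z => R * z.im)
        (by fun_prop) (by fun_prop))) ?_
  refine (Metric.isBounded_closedBall (x := (0:ℂ)) (r := |R|)).subset fun z ⟨hy, h⟩ => ?_
  rw [Metric.mem_closedBall, dist_zero_right]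
  have hn : ‖z‖ ^ 2 = z.re ^ 2 + z.im ^ 2 := by rw [Complex.sq_norm, Complex.normSq_apply]; ring
  have him : z.im ≤ ‖z‖ := (le_abs_self _).trans (Complex.abs_im_le_norm z)
  nlinarith [le_abs_self R, norm_nonneg z, abs_nonneg R]

lemma iteratedDeriv_two_log_psi_horizontal {z : ℂ} (hz : z ∈ UpperH) :
    iteratedDeriv 2 (fun t : ℝ => log (psi (z + t))) 0 =
      2 / z.im / psi z - (2 * z.re / z.im / psi z) ^ 2 := by
  set x := z.re
  set y := z.im
  have hpsi : (fun t : ℝ => psi (z + t)) = fun t => ((x + t) ^ 2 + y ^ 2 + 1) / y := by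
    funext t; simp [psi, x, y]
  have hderiv (t : ℝ) : HasDerivAt (fun t : ℝ => psi (z + t)) (2 * (x + t) / y) t := by
    rw [hpsi]
    exact ((((hasDerivAt_id' t).const_add x).fun_pow 2).add_const (y ^ 2) |>.add_const 1
      |>.div_const y).congr_deriv (by norm_num)
  have hderiv' : HasDerivAt (fun t : ℝ => 2 * (x + t) / y) (2 / y) 0 :=
    ((((hasDerivAt_id' (0:ℝ)).const_add x).const_mul 2).div_const y).congr_deriv (by norm_num)
  simpa using iteratedDeriv_two_log_comp (.of_forall hderiv) hderiv'
    (by simpa using (two_pos.trans_le (two_le_psi hz)))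

lemma iteratedDeriv_two_log_psi_vertical {z : ℂ} (hz : z ∈ UpperH) :
    iteratedDeriv 2 (fun t : ℝ => log (psi (z + t * Complex.I))) 0 =
      2 * (z.re ^ 2 + 1) / z.im ^ 3 / psi z -
        ((z.im ^ 2 - z.re ^ 2 - 1) / z.im ^ 2 / psi z) ^ 2 := by
  have hy : 0 < z.im := hz
  set x := z.re
  set y := z.im
  have hpsi : (fun t : ℝ => psi (z + t * Complex.I)) =
      fun t => (x ^ 2 + (y + t) ^ 2 + 1) / (y + t) := by
    funext t; simp [psi, x, y]
  have hderiv (t : ℝ) (ht : 0 < y + t) : HasDerivAt (fun t : ℝ => psi (z + t * Complex.I))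
      (((y + t) ^ 2 - x ^ 2 - 1) / (y + t) ^ 2) t := by
    rw [hpsi]
    have h₀ := (hasDerivAt_id' t).const_add y
    exact ((h₀.fun_pow 2).const_add (x ^ 2) |>.add_const 1).fun_div h₀ ht.ne' |>.congr_deriv
      (by field_simp; ring)
  have hderiv' : HasDerivAt (fun t : ℝ => ((y + t) ^ 2 - x ^ 2 - 1) / (y + t) ^ 2)
      (2 * (x ^ 2 + 1) / y ^ 3) 0 := by
    have h₀ := (hasDerivAt_id' (0:ℝ)).const_add y
    exact ((h₀.fun_pow 2).sub_const (x ^ 2) |>.sub_const 1).fun_div (h₀.fun_pow 2)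
      (by positivity) |>.congr_deriv (by field_simp; ring)
  have hev : ∀ᶠ t in 𝓝 (0:ℝ), 0 < y + t :=
    (continuous_const.add continuous_id).continuousAt.eventually (lt_mem_nhds (by simpa using hy))
  simpa using iteratedDeriv_two_log_comp (hev.mono hderiv) hderiv'
    (by simpa using (two_pos.trans_le (two_le_psi hz)))

lemma hypLaplacian_log_psi_le {z : ℂ} (hz : z ∈ UpperH) :
    hypLaplacian (fun z => log (psi z)) z ≤ 2 := by
  have hy : 0 < z.im := hz
  have hN : 0 < z.re ^ 2 + z.im ^ 2 + 1 := by positivity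
  have key : hypLaplacian (fun z => log (psi z)) z =
      1 + (2 * z.im / (z.re ^ 2 + z.im ^ 2 + 1)) ^ 2 := by
    rw [hypLaplacian, iteratedDeriv_two_log_psi_horizontal hz,
      iteratedDeriv_two_log_psi_vertical hz, psi]
    field_simp
    ring
  have hle : 2 * z.im / (z.re ^ 2 + z.im ^ 2 + 1) ≤ 1 := by
    rw [div_le_one hN]; nlinarith [sq_nonneg z.re, sq_nonneg (z.im - 1)]
  rw [key]
  nlinarith [div_pos (by positivity : (0:ℝ) < 2 * z.im) hN]

lemma exists_isMaxOn_upperH {g : ℂ → ℝ} (hg : ContinuousOn g UpperH) {z₀ : ℂ} (hz₀ : z₀ ∈ UpperH)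
    {R : ℝ} (hR : ∀ z ∈ UpperH, R < psi z → g z ≤ g z₀) : ∃ z ∈ UpperH, IsMaxOn g UpperH z := by
  have hz₀K : z₀ ∈ {z ∈ UpperH | psi z ≤ max R (psi z₀)} := ⟨hz₀, le_max_right _ _⟩
  obtain ⟨zs, hzsK, hmax⟩ :=
    (isCompact_psi_le _).exists_isMaxOn ⟨z₀, hz₀K⟩ (hg.mono fun z hz => hz.1)
  refine ⟨zs, hzsK.1, fun z hz => ?_⟩
  by_cases hzK : psi z ≤ max R (psi z₀)
  · exact hmax ⟨hz, hzK⟩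
  · exact (hR z hz (lt_of_le_of_lt (le_max_left _ _) (not_le.1 hzK))).trans (hmax hz₀K)

theorem nonpos_of_mul_le_hypLaplacian {w : ℂ → ℝ} {c M : ℝ} (hc : 0 < c)
    (hw : ContDiffOn ℝ 2 w UpperH) (hM : ∀ z ∈ UpperH, w z ≤ M)
    (h : ∀ z ∈ UpperH, 0 < w z → c * w z ≤ hypLaplacian w z) : ∀ z ∈ UpperH, w z ≤ 0 := by
  intro z₀ hz₀
  by_contra! hw₀
  set L : ℂ → ℝ := fun z => log (psi z)
  have hL (z : ℂ) (hz : z ∈ UpperH) : 0 ≤ L z := log_nonneg (by linarith [two_le_psi hz])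
  obtain ⟨ε, hε, hεw⟩ := exists_pos_mul_lt (mul_pos hc hw₀) (2 + c * L z₀)
  set g : ℂ → ℝ := fun z => w z - ε * L z
  have hg : ContDiffOn ℝ 2 g UpperH := hw.sub (contDiffOn_const.mul contDiffOn_log_psi)
  have hcoercive (z : ℂ) (hz : z ∈ UpperH) (hR : exp ((M - g z₀) / ε) < psi z) : g z ≤ g z₀ := by
    have := (div_lt_iff₀' hε).1 ((lt_log_iff_exp_lt (by linarith [two_le_psi hz])).2 hR)
    linarith [hM z hz]
  obtain ⟨zs, hzs, hmax⟩ := exists_isMaxOn_upperH hg.continuousOn hz₀ hcoercive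
  have hnhds : UpperH ∈ 𝓝 zs := isOpen_upperH.mem_nhds hzs
  have hΔg : hypLaplacian g zs ≤ 0 :=
    hypLaplacian_nonpos_of_isLocalMax (hg.contDiffAt hnhds).continuousAt (hmax.isLocalMax hnhds)
  have hΔw : hypLaplacian w zs ≤ 2 * ε := by
    have hsplit := hypLaplacian_sub (hw.contDiffAt hnhds)
      ((contDiffOn_const.mul contDiffOn_log_psi).contDiffAt hnhds) (v := fun z => ε * L z)
    rw [hypLaplacian_const_mul] at hsplit
    nlinarith [hypLaplacian_log_psi_le hzs]
  have hwzs : w z₀ - ε * L z₀ ≤ w zs := by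
    have : w z₀ - ε * L z₀ ≤ w zs - ε * L zs := hmax hz₀
    nlinarith [hL zs hzs]
  have hcwzs : 2 * ε < c * w zs := by nlinarith [mul_le_mul_of_nonneg_left hwzs hc.le]
  have hpos : 0 < w zs := pos_of_mul_pos_right (hcwzs.trans' (by positivity)) hc.le
  linarith [h zs hzs hpos]

lemma exp_mul_tangent_le (k a b : ℝ) : exp (k * b) * (1 + k * (a - b)) ≤ exp (k * a) := by
  calc exp (k * b) * (1 + k * (a - b)) ≤ exp (k * b) * exp (k * (a - b)) := by
        gcongr; linarith [add_one_le_exp (k * (a - b))]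
    _ = exp (k * a) := by rw [← exp_add]; ring_nf

lemma gauss_rhs_sub_ge {η f a b : ℝ} (hf : 0 ≤ f) (hsmall : exp (-6 * b) * f ≤ η) (hba : b ≤ a) :
    4 * (1 - η) * exp (2 * b) * (a - b) ≤
      (2 * exp (2 * a) - 1 + exp (-4 * a) * f) - (2 * exp (2 * b) - 1 + exp (-4 * b) * f) := by
  have h₁ := exp_mul_tangent_le 2 a b
  have h₂ := mul_le_mul_of_nonneg_right (exp_mul_tangent_le (-4) a b) hf
  have h₃ : exp (-4 * b) * f ≤ η * exp (2 * b) := by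
    calc exp (-4 * b) * f = exp (2 * b) * (exp (-6 * b) * f) := by
          rw [← mul_assoc, ← exp_add]; ring_nf
      _ ≤ exp (2 * b) * η := by gcongr
      _ = η * exp (2 * b) := mul_comm _ _
  nlinarith [mul_le_mul_of_nonneg_left h₃ (sub_nonneg.2 hba)]

lemma le_of_gauss_equation {η : ℝ} (hη : η < 1) {f u v : ℂ → ℝ} (hf : ∀ z ∈ UpperH, 0 ≤ f z)
    (hu : ContDiffOn ℝ 2 u UpperH) (hv : ContDiffOn ℝ 2 v UpperH) {Mu Mv : ℝ}
    (hMu : ∀ z ∈ UpperH, u z ≤ Mu) (hMv : ∀ z ∈ UpperH, -Mv ≤ v z)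
    (hu_eq : ∀ z ∈ UpperH,
      hypLaplacian u z = 2 * exp (2 * u z) - 1 + exp (-4 * u z) * f z)
    (hv_eq : ∀ z ∈ UpperH,
      hypLaplacian v z = 2 * exp (2 * v z) - 1 + exp (-4 * v z) * f z)
    (hv_small : ∀ z ∈ UpperH, exp (-6 * v z) * f z ≤ η) :
    ∀ z ∈ UpperH, u z ≤ v z := by
  have hη' : 0 < 1 - η := sub_pos.2 hη
  have key := nonpos_of_mul_le_hypLaplacian (w := fun z => u z - v z) (M := Mu + Mv)
    (c := 4 * (1 - η) * exp (-2 * Mv)) (by positivity) (hu.sub hv)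
    (fun z hz => by linarith [hMu z hz, hMv z hz]) fun z hz hpos => ?_
  · exact fun z hz => sub_nonpos.1 (key z hz)
  have hnhds : UpperH ∈ 𝓝 z := isOpen_upperH.mem_nhds hz
  rw [hypLaplacian_sub (hu.contDiffAt hnhds) (hv.contDiffAt hnhds), hu_eq z hz, hv_eq z hz]
  calc 4 * (1 - η) * exp (-2 * Mv) * (u z - v z) ≤ 4 * (1 - η) * exp (2 * v z) * (u z - v z) := by
        gcongr 4 * (1 - η) * ?_ * _
        exact exp_le_exp.2 (by linarith [hMv z hz])
    _ ≤ _ := gauss_rhs_sub_ge (hf z hz) (hv_small z hz) (sub_pos.1 hpos).le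

theorem gauss_equation_unique_general
    (η : ℝ) (hη : η ∈ Set.Ioo (0 : ℝ) 1)
    (f : ℂ → ℝ)
    (hf_nonneg : ∀ z ∈ UpperH, 0 ≤ f z)
    (u v : ℂ → ℝ)
    (hu_smooth : ContDiffOn ℝ 2 u UpperH)
    (hv_smooth : ContDiffOn ℝ 2 v UpperH)
    (hu_bdd : ∃ M : ℝ, ∀ z ∈ UpperH, |u z| ≤ M)
    (hv_bdd : ∃ M : ℝ, ∀ z ∈ UpperH, |v z| ≤ M)
    (hu_eq : ∀ z ∈ UpperH,
      hypLaplacian u z = 2 * Real.exp (2 * u z) - 1 + Real.exp (-4 * u z) * f z)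
    (hv_eq : ∀ z ∈ UpperH,
      hypLaplacian v z = 2 * Real.exp (2 * v z) - 1 + Real.exp (-4 * v z) * f z)
    (hu_small : ∀ z ∈ UpperH, Real.exp (-6 * u z) * f z ≤ η)
    (hv_small : ∀ z ∈ UpperH, Real.exp (-6 * v z) * f z ≤ η) :
    ∀ z ∈ UpperH, u z = v z := by
  obtain ⟨Mu, hMu⟩ := hu_bdd
  obtain ⟨Mv, hMv⟩ := hv_bdd
  intro z hz
  exact le_antisymm
    (le_of_gauss_equation hη.2 hf_nonneg hu_smooth hv_smooth (fun z hz => (abs_le.1 (hMu z hz)).2)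
      (fun z hz => (abs_le.1 (hMv z hz)).1) hu_eq hv_eq hv_small z hz)
    (le_of_gauss_equation hη.2 hf_nonneg hv_smooth hu_smooth (fun z hz => (abs_le.1 (hMv z hz)).2)
      (fun z hz => (abs_le.1 (hMu z hz)).1) hv_eq hu_eq hu_small z hz)

/-- Uniqueness of bounded `C²` solutions of the Gauss equation
`Δ_ℍ u = 2e^{2u} − 1 + e^{−4u} f` satisfying `e^{−6u} f ≤ η`. -/
theorem gauss_equation_unique
    (η : ℝ) (hη : η ∈ Set.Ioo (0 : ℝ) 1)
    (f : ℂ → ℝ) (hf_cont : ContinuousOn f UpperH)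
    (hf_nonneg : ∀ z ∈ UpperH, 0 ≤ f z)
    (u v : ℂ → ℝ)
    (hu_smooth : ContDiffOn ℝ 2 u UpperH)
    (hv_smooth : ContDiffOn ℝ 2 v UpperH)
    (hu_bdd : ∃ M : ℝ, ∀ z ∈ UpperH, |u z| ≤ M)
    (hv_bdd : ∃ M : ℝ, ∀ z ∈ UpperH, |v z| ≤ M)
    (hu_eq : ∀ z ∈ UpperH,
      hypLaplacian u z = 2 * Real.exp (2 * u z) - 1 + Real.exp (-4 * u z) * f z)
    (hv_eq : ∀ z ∈ UpperH,
      hypLaplacian v z = 2 * Real.exp (2 * v z) - 1 + Real.exp (-4 * v z) * f z)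
    (hu_small : ∀ z ∈ UpperH, Real.exp (-6 * u z) * f z ≤ η)
    (hv_small : ∀ z ∈ UpperH, Real.exp (-6 * v z) * f z ≤ η) :
    ∀ z ∈ UpperH, u z = v z :=
  gauss_equation_unique_general η hη f hf_nonneg u v hu_smooth hv_smooth hu_bdd hv_bdd hu_eq hv_eq
    hu_small hv_small
end

section
/- Let m > 0 and let c : ℍ → ℝ be a continuous function with c(z) ≥ m for all z ∈ ℍ. If v : ℍ → ℝ is a bounded C² function satisfying −Δ_ℍ v + c·v = 0 on ℍ, then v = 0. In other words, the linear operator L v = −Δ_ℍ v + c·v is injective on bounded C² functions. -/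
open Filter Topology Set

theorem IsLocalMax.iteratedDeriv_two_nonpos_s7 {f : ℝ → ℝ} {x₀ : ℝ} (hmax : IsLocalMax f x₀)
    (hf : ContDiffAt ℝ 2 f x₀) : iteratedDeriv 2 f x₀ ≤ 0 := by
  rw [iteratedDeriv_succ, iteratedDeriv_one]
  by_contra! hpos
  -- then `f'` is positive just to the right of `x₀`, so `f` increases there
  have hderiv_pos : ∀ᶠ x in 𝓝[>] x₀, 0 < deriv f x :=
    deriv_pos_right_of_sign_deriv <| nhdsWithin_le_nhds <|
      eventually_nhdsWithin_sign_eq_of_deriv_pos hpos hmax.deriv_eq_zero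
  have hdiff : ∀ᶠ x in 𝓝 x₀, DifferentiableAt ℝ f x :=
    (hf.eventually (by simp)).mono fun x hx => hx.differentiableAt (by simp)
  obtain ⟨b, hb : x₀ < b, hsub⟩ := (mem_nhdsGT_iff_exists_Ioo_subset.mp
    (hderiv_pos.and (nhdsWithin_le_nhds (hdiff.and hmax))))
  have hcont : ContinuousOn f (Ico x₀ b) := by
    rintro x ⟨hx₀, hxb⟩
    rcases hx₀.eq_or_lt with rfl | hx₀
    · exact hf.continuousAt.continuousWithinAt
    · exact (hsub ⟨hx₀, hxb⟩).2.1.continuousAt.continuousWithinAt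
  have hmono : StrictMonoOn f (Ico x₀ b) :=
    strictMonoOn_of_deriv_pos (convex_Ico x₀ b) hcont fun x hx =>
      (hsub (by simpa using hx)).1
  have hmid : (x₀ + b) / 2 ∈ Ioo x₀ b := ⟨by linarith, by linarith⟩
  have := hmono (left_mem_Ico.mpr hb) (Ioo_subset_Ico_self hmid) hmid.1
  exact this.not_ge (hsub hmid).2.2

lemma iteratedDeriv_two_eq_of_hasDerivAt {f f' : ℝ → ℝ} {x a : ℝ}
    (hf : ∀ᶠ t in 𝓝 x, HasDerivAt f (f' t) t) (hf' : HasDerivAt f' a x) :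
    iteratedDeriv 2 f x = a := by
  rw [iteratedDeriv_succ, iteratedDeriv_one]
  exact (EventuallyEq.deriv_eq (hf.mono fun t ht => ht.deriv)).trans hf'.deriv

lemma hasDerivAt_sq_add (a b t : ℝ) :
    HasDerivAt (fun t : ℝ => (a + t) ^ 2 + b) (2 * (a + t)) t := by
  simpa using (((hasDerivAt_id t).const_add a).pow 2).add_const b

section HypLaplacian

variable {u φ : ℂ → ℝ} {z : ℂ}

lemma ContDiffAt.comp_axes {n : WithTop ℕ∞} (hu : ContDiffAt ℝ n u z) :
    ContDiffAt ℝ n (fun t : ℝ => u (z + t)) 0 ∧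
      ContDiffAt ℝ n (fun t : ℝ => u (z + t * Complex.I)) 0 :=
  ⟨ContDiffAt.comp (g := u) 0 (by simpa using hu)
      (contDiffAt_const.add Complex.ofRealCLM.contDiff.contDiffAt),
    ContDiffAt.comp (g := u) 0 (by simpa using hu)
      (contDiffAt_const.add (Complex.ofRealCLM.contDiff.contDiffAt.mul contDiffAt_const))⟩

lemma hypLaplacian_neg :
    hypLaplacian (fun w => -u w) z = -hypLaplacian u z := by
  simp only [hypLaplacian, iteratedDeriv_fun_neg]
  ring

lemma hypLaplacian_sub_const_mul (hu : ContDiffAt ℝ 2 u z) (hφ : ContDiffAt ℝ 2 φ z) (ε : ℝ) :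
    hypLaplacian (fun w => u w - ε * φ w) z = hypLaplacian u z - ε * hypLaplacian φ z := by
  obtain ⟨hu₁, hu₂⟩ := hu.comp_axes
  obtain ⟨hφ₁, hφ₂⟩ := hφ.comp_axes
  simp only [hypLaplacian]
  rw [iteratedDeriv_fun_sub hu₁ (contDiffAt_const.mul hφ₁),
    iteratedDeriv_fun_sub hu₂ (contDiffAt_const.mul hφ₂),
    iteratedDeriv_const_mul ε hφ₁, iteratedDeriv_const_mul ε hφ₂]
  ring

lemma IsLocalMax.hypLaplacian_nonpos (hmax : IsLocalMax u z) (hu : ContDiffAt ℝ 2 u z) :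
    hypLaplacian u z ≤ 0 := by
  obtain ⟨hu₁, hu₂⟩ := hu.comp_axes
  have hmax₁ : IsLocalMax (fun t : ℝ => u (z + t)) 0 :=
    IsLocalMax.comp_continuous (g := fun t : ℝ => z + t) (by simpa using hmax) (by fun_prop)
  have hmax₂ : IsLocalMax (fun t : ℝ => u (z + t * Complex.I)) 0 :=
    IsLocalMax.comp_continuous (g := fun t : ℝ => z + t * Complex.I) (by simpa using hmax)
      (by fun_prop)
  exact mul_nonpos_of_nonneg_of_nonpos (sq_nonneg _)
    (add_nonpos (hmax₁.iteratedDeriv_two_nonpos_s7 hu₁) (hmax₂.iteratedDeriv_two_nonpos_s7 hu₂))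

end HypLaplacian

section Barrier

variable {z : ℂ}

-- `coshDistI z = Real.cosh (hypDist z Complex.I)`
noncomputable def coshDistI (z : ℂ) : ℝ := (z.re ^ 2 + z.im ^ 2 + 1) / (2 * z.im)

lemma one_le_coshDistI (hz : 0 < z.im) : 1 ≤ coshDistI z := by
  rw [coshDistI, le_div_iff₀ (by positivity)]
  nlinarith [sq_nonneg (z.im - 1), sq_nonneg z.re]

lemma coshDistI_I : coshDistI Complex.I = 1 := by
  simp [coshDistI]

lemma isCompact_coshDistI_sublevel (R : ℝ) : IsCompact {z ∈ UpperH | coshDistI z ≤ R} := by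
  have hset : {z ∈ UpperH | coshDistI z ≤ R} =
      {z : ℂ | z.re ^ 2 + z.im ^ 2 + 1 ≤ 2 * R * z.im} ∩ {z | 0 ≤ z.im} := by
    ext z
    simp only [UpperH, coshDistI, mem_inter_iff, mem_ofPred_eq]
    constructor
    · rintro ⟨hz, hle⟩
      rw [div_le_iff₀ (by positivity)] at hle
      exact ⟨by linarith, hz.le⟩
    · rintro ⟨hle, hz⟩
      have hz : 0 < z.im := hz.lt_of_ne (by rintro h; rw [← h] at hle; nlinarith [sq_nonneg z.re])
      exact ⟨hz, by rw [div_le_iff₀ (by positivity)]; linarith⟩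
  rw [hset]
  refine Metric.isCompact_of_isClosed_isBounded
    ((isClosed_le (by fun_prop) (by fun_prop)).inter (isClosed_le (by fun_prop) (by fun_prop))) ?_
  refine (Metric.isBounded_iff_subset_closedBall 0).mpr ⟨2 * |R|, fun z ⟨hle, hz⟩ => ?_⟩
  simp only [mem_ofPred_eq] at hle hz
  rw [Metric.mem_closedBall, dist_zero_right]
  have hsq : ‖z‖ ^ 2 ≤ 2 * |R| * ‖z‖ := by
    rw [Complex.sq_norm, Complex.normSq_apply]
    nlinarith [mul_le_mul_of_nonneg_right (le_abs_self R) hz,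
      mul_le_mul_of_nonneg_left (Complex.im_le_norm z) (abs_nonneg R)]
  nlinarith [norm_nonneg z, abs_nonneg R]

lemma contDiffAt_log_coshDistI {n : WithTop ℕ∞} (hz : 0 < z.im) :
    ContDiffAt ℝ n (fun z => Real.log (coshDistI z)) z := by
  have hre : ContDiff ℝ n Complex.re := Complex.reCLM.contDiff
  have him : ContDiff ℝ n Complex.im := Complex.imCLM.contDiff
  have hne : 2 * z.im ≠ 0 := by positivity
  exact ((by fun_prop : ContDiffAt ℝ n (fun z : ℂ => z.re ^ 2 + z.im ^ 2 + 1) z).div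
    (by fun_prop) hne).log (one_pos.trans_le (one_le_coshDistI hz)).ne'

lemma iteratedDeriv_two_log_coshDistI_horizontal (hz : 0 < z.im) :
    iteratedDeriv 2 (fun t : ℝ => Real.log (coshDistI (z + t))) 0 =
      2 * (z.im ^ 2 + 1 - z.re ^ 2) / (z.re ^ 2 + z.im ^ 2 + 1) ^ 2 := by
  have hq : ∀ t : ℝ, (z.re + t) ^ 2 + (z.im ^ 2 + 1) ≠ 0 := fun t => by positivity
  refine iteratedDeriv_two_eq_of_hasDerivAt
    (f' := fun t => 2 * (z.re + t) / ((z.re + t) ^ 2 + (z.im ^ 2 + 1)))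
    (Eventually.of_forall fun t => ?_) ?_
  · convert ((hasDerivAt_sq_add z.re (z.im ^ 2 + 1) t).div_const (2 * z.im)).log
      (div_ne_zero (hq t) (by positivity)) using 1
    · funext s; simp [coshDistI]; ring_nf
    · rw [div_div_div_cancel_right₀ (by positivity)]
  · refine ((((hasDerivAt_id (0 : ℝ)).const_add z.re).const_mul 2).fun_div
      (hasDerivAt_sq_add z.re (z.im ^ 2 + 1) 0) (hq 0)).congr_deriv ?_
    simp only [id, add_zero, mul_one]
    field_simp
    ring

lemma iteratedDeriv_two_log_coshDistI_vertical (hz : 0 < z.im) :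
    iteratedDeriv 2 (fun t : ℝ => Real.log (coshDistI (z + t * Complex.I))) 0 =
      2 * (z.re ^ 2 + 1 - z.im ^ 2) / (z.re ^ 2 + z.im ^ 2 + 1) ^ 2 + 1 / z.im ^ 2 := by
  have hq : ∀ t : ℝ, (z.im + t) ^ 2 + (z.re ^ 2 + 1) ≠ 0 := fun t => by positivity
  have hlin : ∀ t : ℝ, HasDerivAt (fun t : ℝ => z.im + t) 1 t :=
    fun t => (hasDerivAt_id t).const_add z.im
  refine iteratedDeriv_two_eq_of_hasDerivAt
    (f' := fun t => 2 * (z.im + t) / ((z.im + t) ^ 2 + (z.re ^ 2 + 1)) - (z.im + t)⁻¹)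
    ((lt_mem_nhds (neg_lt_zero.mpr hz)).mono fun t ht => ?_) ?_
  · have ht : 0 < z.im + t := by linarith
    convert ((hasDerivAt_sq_add z.im (z.re ^ 2 + 1) t).fun_div ((hlin t).const_mul 2)
      (by positivity)).log (div_ne_zero (hq t) (by positivity)) using 1
    · funext s; simp [coshDistI]; ring_nf
    · field_simp
  · refine (((hlin 0).const_mul 2).fun_div (hasDerivAt_sq_add z.im (z.re ^ 2 + 1) 0)
      (hq 0) |>.sub ((hlin 0).inv (by simpa using hz.ne'))).congr_deriv ?_
    simp only [add_zero, mul_one]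
    field_simp
    ring

lemma hypLaplacian_log_coshDistI (hz : 0 < z.im) :
    hypLaplacian (fun z => Real.log (coshDistI z)) z = 1 + (coshDistI z)⁻¹ ^ 2 := by
  simp only [hypLaplacian]
  rw [iteratedDeriv_two_log_coshDistI_horizontal hz,
    iteratedDeriv_two_log_coshDistI_vertical hz, coshDistI]
  field_simp
  ring

end Barrier

section MaximumPrinciple

variable {m M : ℝ} {c v : ℂ → ℝ}

lemma exists_isMaxOn_sub_mul_log_coshDistI {ε : ℝ} (hε : 0 < ε) (hv : ContinuousOn v UpperH)
    (hM : ∀ z ∈ UpperH, v z ≤ M) :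
    ∃ z₀ ∈ UpperH, IsMaxOn (fun z => v z - ε * Real.log (coshDistI z)) UpperH z₀ := by
  have hI : Complex.I ∈ UpperH := by simp [UpperH]
  set K := {z ∈ UpperH | coshDistI z ≤ Real.exp ((M - v Complex.I) / ε)}
  have hIK : Complex.I ∈ K := ⟨hI, by
    rw [coshDistI_I]; exact Real.one_le_exp (div_nonneg (sub_nonneg.2 (hM _ hI)) hε.le)⟩
  have hψ : ContinuousOn (fun z => Real.log (coshDistI z)) UpperH := fun z hz =>
    (contDiffAt_log_coshDistI (n := 0) hz).continuousAt.continuousWithinAt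
  obtain ⟨z₀, hz₀K, hmax⟩ := (isCompact_coshDistI_sublevel _).exists_isMaxOn ⟨_, hIK⟩
    ((hv.sub (continuousOn_const.mul hψ)).mono fun z hz => hz.1)
  refine ⟨z₀, hz₀K.1, fun z hz => ?_⟩
  by_cases hzK : z ∈ K
  · exact hmax hzK
  have hlog : (M - v Complex.I) / ε < Real.log (coshDistI z) :=
    (Real.lt_log_iff_exp_lt (one_pos.trans_le (one_le_coshDistI hz))).mpr
      (not_le.mp fun h => hzK ⟨hz, h⟩)
  calc v z - ε * Real.log (coshDistI z) ≤ M - ε * ((M - v Complex.I) / ε) :=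
        sub_le_sub (hM z hz) (mul_le_mul_of_nonneg_left hlog.le hε.le)
    _ = v Complex.I - ε * Real.log (coshDistI Complex.I) := by
        rw [coshDistI_I, Real.log_one, mul_zero, mul_div_cancel₀ _ hε.ne']
        ring
    _ ≤ v z₀ - ε * Real.log (coshDistI z₀) := hmax hIK

lemma sub_mul_log_coshDistI_le (hm : 0 < m) (hc : ∀ z ∈ UpperH, m ≤ c z)
    (hv : ContDiffOn ℝ 2 v UpperH) (hM : ∀ z ∈ UpperH, v z ≤ M)
    (hsub : ∀ z ∈ UpperH, c z * v z ≤ hypLaplacian v z) {ε : ℝ} (hε : 0 < ε) {z : ℂ}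
    (hz : z ∈ UpperH) :
    v z - ε * Real.log (coshDistI z) ≤ 2 * ε / m := by
  have hopen : IsOpen UpperH := isOpen_lt continuous_const Complex.continuous_im
  obtain ⟨z₀, hz₀, hmax⟩ := exists_isMaxOn_sub_mul_log_coshDistI hε hv.continuousOn hM
  have hz₀' : 0 < z₀.im := hz₀
  have hv₀ : ContDiffAt ℝ 2 v z₀ := hv.contDiffAt (hopen.mem_nhds hz₀)
  have hψ₀ := contDiffAt_log_coshDistI (n := 2) hz₀'
  have hlap : hypLaplacian v z₀ ≤ 2 * ε := by
    have h := (hmax.isLocalMax (hopen.mem_nhds hz₀)).hypLaplacian_nonpos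
      (hv₀.sub (contDiffAt_const.mul hψ₀))
    rw [hypLaplacian_sub_const_mul hv₀ hψ₀, hypLaplacian_log_coshDistI hz₀'] at h
    have h1 := one_le_coshDistI hz₀'
    have : (coshDistI z₀)⁻¹ ^ 2 ≤ 1 :=
      pow_le_one₀ (inv_nonneg.mpr (zero_le_one.trans h1)) (inv_le_one_of_one_le₀ h1)
    nlinarith
  have hv₀_le : v z₀ ≤ 2 * ε / m := by
    rcases le_or_gt (v z₀) 0 with h | h
    · exact h.trans (div_nonneg (by linarith) hm.le)
    · rw [le_div_iff₀ hm]
      nlinarith [hc z₀ hz₀, hsub z₀ hz₀]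
  calc v z - ε * Real.log (coshDistI z) ≤ v z₀ - ε * Real.log (coshDistI z₀) := hmax hz
    _ ≤ v z₀ := sub_le_self _ (mul_nonneg hε.le (Real.log_nonneg (one_le_coshDistI hz₀')))
    _ ≤ 2 * ε / m := hv₀_le

lemma nonpos_of_mul_le_hypLaplacian_s7 (hm : 0 < m) (hc : ∀ z ∈ UpperH, m ≤ c z)
    (hv : ContDiffOn ℝ 2 v UpperH) (hM : ∀ z ∈ UpperH, v z ≤ M)
    (hsub : ∀ z ∈ UpperH, c z * v z ≤ hypLaplacian v z) {z : ℂ} (hz : z ∈ UpperH) :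
    v z ≤ 0 := by
  have hlim : Tendsto (fun ε => ε * (Real.log (coshDistI z) + 2 / m)) (𝓝[>] 0) (𝓝 0) :=
    ((continuous_id.mul continuous_const).tendsto' 0 0 (zero_mul _)).mono_left
      nhdsWithin_le_nhds
  refine ge_of_tendsto hlim (eventually_mem_nhdsWithin.mono fun ε (hε : 0 < ε) => ?_)
  have := sub_mul_log_coshDistI_le hm hc hv hM hsub hε hz
  linarith [show ε * (Real.log (coshDistI z) + 2 / m) = ε * Real.log (coshDistI z) + 2 * ε / m
    by ring]

end MaximumPrinciple

theorem linearized_injective_general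
    (m : ℝ) (hm : 0 < m)
    (c : ℂ → ℝ)
    (hc_low : ∀ z ∈ UpperH, m ≤ c z)
    (v : ℂ → ℝ)
    (hv_smooth : ContDiffOn ℝ 2 v UpperH)
    (hv_bdd : ∃ M : ℝ, ∀ z ∈ UpperH, |v z| ≤ M)
    (hv_eq : ∀ z ∈ UpperH, -hypLaplacian v z + c z * v z = 0) :
    ∀ z ∈ UpperH, v z = 0 := by
  obtain ⟨M, hM⟩ := hv_bdd
  intro z hz
  have hv_nonpos : v z ≤ 0 :=
    nonpos_of_mul_le_hypLaplacian_s7 hm hc_low hv_smooth (fun w hw => (le_abs_self _).trans (hM w hw))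
      (fun w hw => by linarith [hv_eq w hw]) hz
  have hv_nonneg : -v z ≤ 0 :=
    nonpos_of_mul_le_hypLaplacian_s7 hm hc_low hv_smooth.neg
      (fun w hw => (neg_le_abs _).trans (hM w hw))
      (fun w hw => by rw [hypLaplacian_neg]; linarith [hv_eq w hw]) hz
  linarith

/-- Injectivity of the linearized operator `L v = −Δ_ℍ v + c·v` on bounded
`C²` functions on the upper half-plane. -/
theorem linearized_injective
    (m : ℝ) (hm : 0 < m)
    (c : ℂ → ℝ) (hc_cont : ContinuousOn c UpperH)
    (hc_low : ∀ z ∈ UpperH, m ≤ c z)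
    (v : ℂ → ℝ)
    (hv_smooth : ContDiffOn ℝ 2 v UpperH)
    (hv_bdd : ∃ M : ℝ, ∀ z ∈ UpperH, |v z| ≤ M)
    (hv_eq : ∀ z ∈ UpperH, -hypLaplacian v z + c z * v z = 0) :
    ∀ z ∈ UpperH, v z = 0 :=
  linearized_injective_general m hm c hc_low v hv_smooth hv_bdd hv_eq
end
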